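/- arXiv:1212.1129 — 3 statements merged into one kernel-verified Lean document; each statement's English description precedes it below -/
import Mathlib

section
/- For 0 < m ≤ 2 with m ≠ 1, the function θ_m(r,s) = ((m-1)/m) · (r^m - s^m)/(r^{m-1} - s^{m-1}) (defined for r,s > 0, r ≠ s) admits the integral representation θ_m(r,s) = ∫₀¹ ((1-α) r^{m-1} + α s^{m-1})^{1/(m-1)} dα. -/
/-! Substituting x = (1 - α) a + α b with a = r^(m-1), b = s^(m-1) turns the integral into
(b - a)⁻¹ ∫ₐᵇ x^(1/(m-1)) dx, and the power rule evaluates it as (b^q - a^q) / (q (b - a))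
with q = m/(m-1), where a^q = r^m and b^q = s^m. -/

open Real Set

theorem integral_one_sub_mul_add_mul_rpow {a b p : ℝ} (hab : a ≠ b)
    (hp : -1 < p ∨ p ≠ -1 ∧ (0 : ℝ) ∉ uIcc a b) :
    ∫ α in (0 : ℝ)..1, ((1 - α) * a + α * b) ^ p =
      (b ^ (p + 1) - a ^ (p + 1)) / ((p + 1) * (b - a)) := by
  have hba : b - a ≠ 0 := sub_ne_zero.2 hab.symm
  have hp1 : p + 1 ≠ 0 := by
    rcases hp with hp | ⟨hp, -⟩
    · linarith
    · exact fun h => hp (by linarith)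
  have hline : ∀ α : ℝ, (1 - α) * a + α * b = a + (b - a) * α := fun α => by ring
  simp_rw [hline]
  rw [intervalIntegral.integral_comp_add_mul (fun x => x ^ p) hba, mul_zero, add_zero, mul_one,
    add_sub_cancel, integral_rpow hp, smul_eq_mul]
  field_simp

theorem theta_m_integral_representation_general
    (m : ℝ) (hm0 : 0 < m) (hm1 : m ≠ 1)
    (r s : ℝ) (hr : 0 < r) (hs : 0 < s) (hrs : r ≠ s) :
    ((m - 1) / m) * (r ^ m - s ^ m) / (r ^ (m - 1) - s ^ (m - 1)) =
      ∫ α in (0:ℝ)..1, ((1 - α) * r ^ (m - 1) + α * s ^ (m - 1)) ^ (1 / (m - 1)) := by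
  have hm1' : m - 1 ≠ 0 := sub_ne_zero.2 hm1
  have hexp : 1 / (m - 1) + 1 = m / (m - 1) := by field_simp; ring
  have hpow : ∀ x : ℝ, 0 ≤ x → (x ^ (m - 1)) ^ (m / (m - 1)) = x ^ m := fun x hx => by
    rw [← rpow_mul hx, mul_div_cancel₀ _ hm1']
  have hrs' : r ^ (m - 1) ≠ s ^ (m - 1) := fun h => hrs (rpow_left_injOn hm1' hr.le hs.le h)
  have hp : 1 / (m - 1) ≠ -1 ∧ (0 : ℝ) ∉ uIcc (r ^ (m - 1)) (s ^ (m - 1)) :=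
    ⟨fun h => hm0.ne' (by field_simp at h; linarith),
      notMem_uIcc_of_lt (rpow_pos_of_pos hr _) (rpow_pos_of_pos hs _)⟩
  rw [integral_one_sub_mul_add_mul_rpow hrs' (Or.inr hp), hexp, hpow r hr.le, hpow s hs.le]
  field_simp
  ring

theorem theta_m_integral_representation
    (m : ℝ) (hm0 : 0 < m) (hm2 : m ≤ 2) (hm1 : m ≠ 1)
    (r s : ℝ) (hr : 0 < r) (hs : 0 < s) (hrs : r ≠ s) :
    ((m - 1) / m) * (r ^ m - s ^ m) / (r ^ (m - 1) - s ^ (m - 1)) =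
      ∫ α in (0:ℝ)..1, ((1 - α) * r ^ (m - 1) + α * s ^ (m - 1)) ^ (1 / (m - 1)) :=
  theta_m_integral_representation_general m hm0 hm1 r s hr hs hrs
end

section
/- For 0 < m ≤ 2 with m ≠ 1, the function θ_m(r,s) = ((m-1)/m)(r^m - s^m)/(r^{m-1} - s^{m-1}) is jointly concave on (0,∞) × (0,∞). -/
open Real Set

/-!
With `q = m - 1 ∈ (-1, 1]`, substituting `u = (1 - t) r^q + t s^q` shows that `θ_m(r, s)` is the
average over `t ∈ [0, 1]` of the weighted power means `((1 - t) r^q + t s^q)^(1/q)`, so it suffices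
that each weighted power mean `M_q` with `q ≤ 1` is concave. `M_q` is positive and homogeneous of
degree one, and such a function is concave as soon as its superlevel set `{M_q ≥ 1}` is convex.
That set is `{α x^q + β y^q ≥ 1}` for `q > 0` and `{α x^q + β y^q ≤ 1}` for `q < 0`, convex because
`x ↦ x^q` is concave in the first case and convex in the second.
-/

theorem concaveOn_of_homogeneous_of_convex_superlevel {E : Type*} [AddCommGroup E] [Module ℝ E]
    {s : Set E} {f : E → ℝ} (hs : Convex ℝ s) (hs_smul : ∀ c : ℝ, 0 < c → ∀ x ∈ s, c • x ∈ s)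
    (hf_pos : ∀ x ∈ s, 0 < f x) (hf_smul : ∀ c : ℝ, 0 < c → ∀ x ∈ s, f (c • x) = c * f x)
    (hlevel : Convex ℝ {x ∈ s | 1 ≤ f x}) : ConcaveOn ℝ s f := by
  refine ⟨hs, fun x hx y hy a b ha hb hab => ?_⟩
  have hu := hf_pos x hx
  have hv := hf_pos y hy
  set u := f x
  set v := f y
  set w := a * u + b * v
  have hw : 0 < w := by
    simpa [w] using (convex_Ioi (0:ℝ)) (mem_Ioi.2 hu) (mem_Ioi.2 hv) ha hb hab
  have normalize : ∀ z ∈ s, 0 < f z → (f z)⁻¹ • z ∈ {x ∈ s | 1 ≤ f x} := by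
    intro z hz hfz
    refine ⟨hs_smul _ (inv_pos.2 hfz) z hz, ?_⟩
    rw [hf_smul _ (inv_pos.2 hfz) z hz, inv_mul_cancel₀ hfz.ne']
  have hmem := hlevel (normalize x hx hu) (normalize y hy hv)
    (div_nonneg (mul_nonneg ha hu.le) hw.le) (div_nonneg (mul_nonneg hb hv.le) hw.le)
    (by rw [← add_div, div_self hw.ne'])
  have hcomb : (a * u / w) • (u⁻¹ • x) + (b * v / w) • (v⁻¹ • y) = w⁻¹ • (a • x + b • y) := by
    simp only [smul_smul, smul_add]
    congr 2 <;> field_simp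
  obtain ⟨-, hmem⟩ := hmem
  rwa [hcomb, hf_smul _ (inv_pos.2 hw) _ (hs hx hy ha hb hab), inv_mul_eq_div,
    one_le_div hw] at hmem

theorem convexOn_rpow_of_nonpos {p : ℝ} (hp : p ≤ 0) : ConvexOn ℝ (Ioi 0) fun x : ℝ ↦ x ^ p := by
  refine convexOn_of_hasDerivWithinAt2_nonneg (convex_Ioi 0) (f' := fun x ↦ p * x ^ (p - 1))
    (f'' := fun x ↦ p * ((p - 1) * x ^ (p - 1 - 1)))
    (fun x hx ↦ (continuousAt_rpow_const x p (Or.inl hx.ne')).continuousWithinAt) ?_ ?_ ?_ <;>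
    rw [interior_Ioi] <;> intro x hx
  · exact (hasDerivAt_rpow_const (Or.inl (ne_of_gt hx))).hasDerivWithinAt
  · exact ((hasDerivAt_rpow_const (Or.inl (ne_of_gt hx))).const_mul p).hasDerivWithinAt
  · have := rpow_pos_of_pos (mem_Ioi.1 hx) (p - 1 - 1)
    rw [← mul_assoc]
    exact mul_nonneg (mul_nonneg_of_nonpos_of_nonpos hp (by linarith)) this.le

theorem ConvexOn.weighted_add_prod {φ : ℝ → ℝ} {s : Set ℝ} (hφ : ConvexOn ℝ s φ) {α β : ℝ}
    (hα : 0 ≤ α) (hβ : 0 ≤ β) : ConvexOn ℝ (s ×ˢ s) fun p : ℝ × ℝ ↦ α * φ p.1 + β * φ p.2 :=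
  (((hφ.comp_linearMap (LinearMap.fst ℝ ℝ ℝ)).subset (fun _ hp ↦ hp.1) (hφ.1.prod hφ.1)).smul
      hα).add
    (((hφ.comp_linearMap (LinearMap.snd ℝ ℝ ℝ)).subset (fun _ hp ↦ hp.2) (hφ.1.prod hφ.1)).smul
      hβ)

theorem ConcaveOn.weighted_add_prod {φ : ℝ → ℝ} {s : Set ℝ} (hφ : ConcaveOn ℝ s φ) {α β : ℝ}
    (hα : 0 ≤ α) (hβ : 0 ≤ β) : ConcaveOn ℝ (s ×ˢ s) fun p : ℝ × ℝ ↦ α * φ p.1 + β * φ p.2 :=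
  (((hφ.comp_linearMap (LinearMap.fst ℝ ℝ ℝ)).subset (fun _ hp ↦ hp.1) (hφ.1.prod hφ.1)).smul
      hα).add
    (((hφ.comp_linearMap (LinearMap.snd ℝ ℝ ℝ)).subset (fun _ hp ↦ hp.2) (hφ.1.prod hφ.1)).smul
      hβ)

theorem concaveOn_intervalIntegral {E : Type*} [AddCommMonoid E] [Module ℝ E] {s : Set E}
    {F : ℝ → E → ℝ} {a b : ℝ} (hab : a ≤ b) (hF : ∀ t ∈ Icc a b, ConcaveOn ℝ s (F t))
    (hint : ∀ x ∈ s, IntervalIntegrable (fun t ↦ F t x) MeasureTheory.volume a b) :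
    ConcaveOn ℝ s fun x ↦ ∫ t in a..b, F t x := by
  have hs := (hF a (left_mem_Icc.2 hab)).1
  refine ⟨hs, fun x hx y hy c d hc hd hcd ↦ ?_⟩
  simp only [smul_eq_mul]
  rw [← intervalIntegral.integral_const_mul, ← intervalIntegral.integral_const_mul,
    ← intervalIntegral.integral_add ((hint x hx).const_mul c) ((hint y hy).const_mul d)]
  exact intervalIntegral.integral_mono_on hab (((hint x hx).const_mul c).add
    ((hint y hy).const_mul d)) (hint _ (hs hx hy hc hd hcd)) fun t ht ↦ (hF t ht).2 hx hy hc hd hcd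

noncomputable def weightedPowerMean (α β q : ℝ) (p : ℝ × ℝ) : ℝ := (α * p.1 ^ q + β * p.2 ^ q) ^ q⁻¹

section weightedPowerMean

variable {α β q : ℝ}

theorem weightedPowerMean_pos (hα : 0 ≤ α) (hβ : 0 ≤ β) (hαβ : α + β = 1) {p : ℝ × ℝ}
    (hp : p ∈ Ioi (0 : ℝ) ×ˢ Ioi (0 : ℝ)) : 0 < weightedPowerMean α β q p :=
  rpow_pos_of_pos (convex_Ioi (0 : ℝ) (rpow_pos_of_pos hp.1 q) (rpow_pos_of_pos hp.2 q) hα hβ hαβ) _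

theorem weightedPowerMean_smul (hq : q ≠ 0) (hα : 0 ≤ α) (hβ : 0 ≤ β) {c : ℝ} (hc : 0 < c)
    {p : ℝ × ℝ} (hp : p ∈ Ioi (0 : ℝ) ×ˢ Ioi (0 : ℝ)) :
    weightedPowerMean α β q (c • p) = c * weightedPowerMean α β q p := by
  obtain ⟨hx, hy⟩ := hp
  simp only [weightedPowerMean, Prod.smul_fst, Prod.smul_snd, smul_eq_mul]
  rw [mul_rpow hc.le hx.le, mul_rpow hc.le hy.le, mul_left_comm α, mul_left_comm β, ← mul_add,
    mul_rpow (rpow_nonneg hc.le q)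
      (add_nonneg (mul_nonneg hα (rpow_nonneg hx.le q)) (mul_nonneg hβ (rpow_nonneg hy.le q))),
    rpow_rpow_inv hc.le hq]

theorem convex_setOf_one_le_weightedPowerMean (hq1 : q ≤ 1) (hq : q ≠ 0) (hα : 0 ≤ α) (hβ : 0 ≤ β)
    (hαβ : α + β = 1) :
    Convex ℝ {p ∈ Ioi (0 : ℝ) ×ˢ Ioi (0 : ℝ) | 1 ≤ weightedPowerMean α β q p} := by
  have hg : ∀ p ∈ Ioi (0 : ℝ) ×ˢ Ioi (0 : ℝ), 0 < α * p.1 ^ q + β * p.2 ^ q := fun p hp ↦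
    convex_Ioi (0 : ℝ) (rpow_pos_of_pos hp.1 q) (rpow_pos_of_pos hp.2 q) hα hβ hαβ
  rcases hq.lt_or_gt with hq_neg | hq_pos
  · convert ((convexOn_rpow_of_nonpos hq_neg.le).weighted_add_prod hα hβ).convex_le 1 using 3 with p
    exact and_congr_right fun hp ↦ by
      rw [weightedPowerMean, le_rpow_inv_iff_of_neg one_pos (hg p hp) hq_neg, one_rpow]
  · have hconc := ((concaveOn_rpow hq_pos.le hq1).subset Ioi_subset_Ici_self (convex_Ioi 0))
    convert (hconc.weighted_add_prod hα hβ).convex_ge 1 using 3 with p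
    exact and_congr_right fun hp ↦ by
      rw [weightedPowerMean, le_rpow_inv_iff_of_pos zero_le_one (hg p hp).le hq_pos, one_rpow]

theorem concaveOn_weightedPowerMean (hq1 : q ≤ 1) (hq : q ≠ 0) (hα : 0 ≤ α) (hβ : 0 ≤ β)
    (hαβ : α + β = 1) : ConcaveOn ℝ (Ioi (0 : ℝ) ×ˢ Ioi (0 : ℝ)) (weightedPowerMean α β q) :=
  concaveOn_of_homogeneous_of_convex_superlevel ((convex_Ioi 0).prod (convex_Ioi 0))
    (fun _ hc _ hp ↦ ⟨mul_pos hc hp.1, mul_pos hc hp.2⟩)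
    (fun _ hp ↦ weightedPowerMean_pos hα hβ hαβ hp)
    (fun _ hc _ hp ↦ weightedPowerMean_smul hq hα hβ hc hp)
    (convex_setOf_one_le_weightedPowerMean hq1 hq hα hβ hαβ)

theorem intervalIntegrable_weightedPowerMean {p : ℝ × ℝ} (hp : p ∈ Ioi (0 : ℝ) ×ˢ Ioi (0 : ℝ))
    (q : ℝ) :
    IntervalIntegrable (fun t ↦ weightedPowerMean (1 - t) t q p) MeasureTheory.volume 0 1 := by
  refine ContinuousOn.intervalIntegrable (ContinuousOn.rpow_const (by fun_prop) fun t ht ↦ ?_)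
  rw [uIcc_of_le zero_le_one] at ht
  exact Or.inl (convex_Ioi (0 : ℝ) (rpow_pos_of_pos hp.1 q) (rpow_pos_of_pos hp.2 q)
    (sub_nonneg.2 ht.2) ht.1 (sub_add_cancel 1 t)).ne'

end weightedPowerMean

theorem integral_rpow_lineMap {A B : ℝ} (hA : 0 < A) (hB : 0 < B) (hAB : A ≠ B) {p : ℝ}
    (hp : p ≠ -1) :
    ∫ t in (0 : ℝ)..1, ((1 - t) * A + t * B) ^ p =
      (B ^ (p + 1) - A ^ (p + 1)) / ((p + 1) * (B - A)) := by
  have hlin : ∀ t : ℝ, (1 - t) * A + t * B = (B - A) * t + A := fun t ↦ by ring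
  have h0 : (0 : ℝ) ∉ uIcc A B := fun h ↦ (lt_min hA hB).not_ge h.1
  simp_rw [hlin]
  rw [intervalIntegral.integral_comp_mul_add (fun x ↦ x ^ p) (sub_ne_zero.2 hAB.symm),
    mul_zero, zero_add, mul_one, sub_add_cancel, integral_rpow (Or.inr ⟨hp, h0⟩), smul_eq_mul,
    inv_mul_eq_div, div_div]

noncomputable def thetaMean (m r s : ℝ) : ℝ :=
  if r = s then r else (m - 1) / m * (r ^ m - s ^ m) / (r ^ (m - 1) - s ^ (m - 1))

theorem thetaMean_eq_integral {m : ℝ} (hm0 : m ≠ 0) (hm1 : m ≠ 1) {r s : ℝ} (hr : 0 < r)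
    (hs : 0 < s) :
    thetaMean m r s = ∫ t in (0 : ℝ)..1, weightedPowerMean (1 - t) t (m - 1) (r, s) := by
  have hq : m - 1 ≠ 0 := sub_ne_zero.2 hm1
  unfold thetaMean weightedPowerMean
  split_ifs with hrs
  · subst hrs
    simp [← add_mul, rpow_rpow_inv hr.le hq]
  · have hAB : r ^ (m - 1) ≠ s ^ (m - 1) := fun h ↦ hrs <| by
      rw [← rpow_rpow_inv hr.le hq, h, rpow_rpow_inv hs.le hq]
    have hp : (m - 1)⁻¹ ≠ -1 := by
      rw [Ne, inv_eq_iff_eq_inv, inv_neg, inv_one]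
      exact fun h ↦ hm0 (by linarith)
    have hinv : (m - 1)⁻¹ + 1 = m / (m - 1) := by field_simp; ring
    have hexp : (m - 1) * ((m - 1)⁻¹ + 1) = m := by rw [hinv]; field_simp
    rw [integral_rpow_lineMap (rpow_pos_of_pos hr _) (rpow_pos_of_pos hs _) hAB hp,
      ← rpow_mul hr.le, ← rpow_mul hs.le, hexp, hinv]
    field_simp [sub_ne_zero.2 hAB, sub_ne_zero.2 hAB.symm]
    ring

theorem theta_m_concave
    (m : ℝ) (hm0 : 0 < m) (hm2 : m ≤ 2) (hm1 : m ≠ 1) :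
    ConcaveOn ℝ (Ioi (0:ℝ) ×ˢ Ioi (0:ℝ))
      (fun p : ℝ × ℝ =>
        if p.1 = p.2 then p.1
        else ((m - 1) / m) * (p.1 ^ m - p.2 ^ m) / (p.1 ^ (m - 1) - p.2 ^ (m - 1))) := by
  have hq : m - 1 ≠ 0 := sub_ne_zero.2 hm1
  refine (concaveOn_intervalIntegral zero_le_one (fun t ht ↦
    concaveOn_weightedPowerMean (by linarith) hq (sub_nonneg.2 ht.2) ht.1 (sub_add_cancel 1 t))
    fun p hp ↦ intervalIntegrable_weightedPowerMean hp _).congr fun p hp ↦ ?_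
  exact (thetaMean_eq_integral hm0.ne' hm1 hp.1 hp.2).symm
end

section
/- For 0 < m < m' ≤ 2 (both ≠ 1), and all s, t > 0, we have θ_m(s,t) ≤ θ_{m'}(s,t), where θ_p(s,t) = ∫₀¹ ((1-α)s^{p-1} + α t^{p-1})^{1/(p-1)} dα. -/
/-!
The integrand of `θ_p` is the weighted power mean of `s` and `t` with exponent `p - 1`, so it
suffices to compare the integrands pointwise, i.e. to show that the two-point power mean
`M_r = ((1 - α) s ^ r + α t ^ r) ^ (1 / r)` is monotone in `r ≠ 0`. For exponents of the same
sign this is Jensen's inequality for `x ↦ x ^ (r' / r)`, which is convex when `0 < r ≤ r'` and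
concave when `r ≤ r' < 0`; across `0` the weighted geometric mean `s ^ (1 - α) t ^ α` separates
`M_r` and `M_r'`, by weighted AM-GM applied to `s ^ q` and `t ^ q`.
-/

open Real Set

noncomputable def powerMean (r α s t : ℝ) : ℝ := ((1 - α) * s ^ r + α * t ^ r) ^ r⁻¹

section PowerMean

variable {r r' α s t : ℝ}

lemma weightedMean_rpow_pos (hα : α ∈ Icc 0 1) (hs : 0 < s) (ht : 0 < t) (r : ℝ) :
    0 < (1 - α) * s ^ r + α * t ^ r :=
  convex_Ioi (0 : ℝ) (rpow_pos_of_pos hs r) (rpow_pos_of_pos ht r) (sub_nonneg.2 hα.2) hα.1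
    (sub_add_cancel 1 α)

lemma powerMean_pos (hα : α ∈ Icc 0 1) (hs : 0 < s) (ht : 0 < t) : 0 < powerMean r α s t :=
  rpow_pos_of_pos (weightedMean_rpow_pos hα hs ht r) _

lemma rpow_rpow_div_of_ne_zero (hs : 0 ≤ s) (hr : r ≠ 0) (r' : ℝ) :
    (s ^ r) ^ (r' / r) = s ^ r' := by
  rw [← rpow_mul hs, mul_div_cancel₀ r' hr]

lemma powerMean_rpow (hα : α ∈ Icc 0 1) (hs : 0 < s) (ht : 0 < t) (r' : ℝ) :
    powerMean r α s t ^ r' = ((1 - α) * s ^ r + α * t ^ r) ^ (r' / r) := by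
  rw [powerMean, ← rpow_mul (weightedMean_rpow_pos hα hs ht r).le, inv_mul_eq_div]

lemma geomMean_rpow_le_weightedMean_rpow (hα : α ∈ Icc 0 1) (hs : 0 < s) (ht : 0 < t)
    (q : ℝ) : (s ^ (1 - α) * t ^ α) ^ q ≤ (1 - α) * s ^ q + α * t ^ q := by
  have hG : (s ^ (1 - α) * t ^ α) ^ q = (s ^ q) ^ (1 - α) * (t ^ q) ^ α := by
    rw [mul_rpow (rpow_nonneg hs.le _) (rpow_nonneg ht.le _), ← rpow_mul hs.le,
      ← rpow_mul ht.le, ← rpow_mul hs.le, ← rpow_mul ht.le, mul_comm (1 - α), mul_comm α]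
  rw [hG]
  exact geom_mean_le_arith_mean2_weighted (sub_nonneg.2 hα.2) hα.1 (rpow_nonneg hs.le q)
    (rpow_nonneg ht.le q) (sub_add_cancel 1 α)

lemma geomMean_le_powerMean (hα : α ∈ Icc 0 1) (hs : 0 < s) (ht : 0 < t) (hr : 0 < r) :
    s ^ (1 - α) * t ^ α ≤ powerMean r α s t :=
  (le_rpow_inv_iff_of_pos (by positivity) (weightedMean_rpow_pos hα hs ht r).le hr).2
    (geomMean_rpow_le_weightedMean_rpow hα hs ht r)

lemma powerMean_le_geomMean (hα : α ∈ Icc 0 1) (hs : 0 < s) (ht : 0 < t) (hr : r < 0) :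
    powerMean r α s t ≤ s ^ (1 - α) * t ^ α :=
  (rpow_inv_le_iff_of_neg (weightedMean_rpow_pos hα hs ht r) (by positivity) hr).2
    (geomMean_rpow_le_weightedMean_rpow hα hs ht r)

lemma powerMean_le_powerMean_of_pos (hα : α ∈ Icc 0 1) (hs : 0 < s) (ht : 0 < t) (hr : 0 < r)
    (hrr' : r ≤ r') : powerMean r α s t ≤ powerMean r' α s t := by
  have hr' : 0 < r' := hr.trans_le hrr'
  have jensen := (convexOn_rpow ((one_le_div hr).2 hrr')).2 (rpow_nonneg hs.le r)
    (rpow_nonneg ht.le r) (sub_nonneg.2 hα.2) hα.1 (sub_add_cancel 1 α)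
  simp only [smul_eq_mul, rpow_rpow_div_of_ne_zero hs.le hr.ne',
    rpow_rpow_div_of_ne_zero ht.le hr.ne'] at jensen
  refine (le_rpow_inv_iff_of_pos (powerMean_pos hα hs ht).le
    (weightedMean_rpow_pos hα hs ht r').le hr').2 ?_
  rwa [powerMean_rpow hα hs ht]

lemma powerMean_le_powerMean_of_neg (hα : α ∈ Icc 0 1) (hs : 0 < s) (ht : 0 < t) (hr' : r' < 0)
    (hrr' : r ≤ r') : powerMean r α s t ≤ powerMean r' α s t := by
  have hr : r < 0 := hrr'.trans_lt hr'
  have jensen := (concaveOn_rpow (div_nonneg_of_nonpos hr'.le hr.le)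
    ((div_le_one_of_neg hr).2 hrr')).2 (rpow_nonneg hs.le r) (rpow_nonneg ht.le r)
    (sub_nonneg.2 hα.2) hα.1 (sub_add_cancel 1 α)
  simp only [smul_eq_mul, rpow_rpow_div_of_ne_zero hs.le hr.ne,
    rpow_rpow_div_of_ne_zero ht.le hr.ne] at jensen
  refine (le_rpow_inv_iff_of_neg (powerMean_pos hα hs ht) (weightedMean_rpow_pos hα hs ht r')
    hr').2 ?_
  rwa [powerMean_rpow hα hs ht]

theorem powerMean_mono (hα : α ∈ Icc 0 1) (hs : 0 < s) (ht : 0 < t) (hr : r ≠ 0)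
    (hr' : r' ≠ 0) (hrr' : r ≤ r') : powerMean r α s t ≤ powerMean r' α s t := by
  rcases hr.lt_or_gt with hr | hr
  · rcases hr'.lt_or_gt with hr' | hr'
    · exact powerMean_le_powerMean_of_neg hα hs ht hr' hrr'
    · exact (powerMean_le_geomMean hα hs ht hr).trans (geomMean_le_powerMean hα hs ht hr')
  · exact powerMean_le_powerMean_of_pos hα hs ht hr hrr'

lemma intervalIntegrable_powerMean (hs : 0 < s) (ht : 0 < t) (r : ℝ) :
    IntervalIntegrable (fun α ↦ powerMean r α s t) MeasureTheory.volume 0 1 :=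
  ContinuousOn.intervalIntegrable_of_Icc zero_le_one <|
    ContinuousOn.rpow_const (by fun_prop) fun _ hα ↦
      Or.inl (weightedMean_rpow_pos hα hs ht r).ne'

end PowerMean

theorem theta_m_monotone_in_m_general
    (m m' : ℝ) (hmm' : m < m')
    (hm1 : m ≠ 1) (hm'1 : m' ≠ 1)
    (s t : ℝ) (hs : 0 < s) (ht : 0 < t) :
    (∫ α in (0:ℝ)..1, ((1 - α) * s ^ (m - 1) + α * t ^ (m - 1)) ^ (1 / (m - 1))) ≤
      ∫ α in (0:ℝ)..1, ((1 - α) * s ^ (m' - 1) + α * t ^ (m' - 1)) ^ (1 / (m' - 1)) := by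
  simp only [one_div]
  exact intervalIntegral.integral_mono_on zero_le_one (intervalIntegrable_powerMean hs ht _)
    (intervalIntegrable_powerMean hs ht _) fun α hα ↦
      powerMean_mono hα hs ht (sub_ne_zero.2 hm1) (sub_ne_zero.2 hm'1) (by linarith)

theorem theta_m_monotone_in_m
    (m m' : ℝ) (hm0 : 0 < m) (hmm' : m < m') (hm'2 : m' ≤ 2)
    (hm1 : m ≠ 1) (hm'1 : m' ≠ 1)
    (s t : ℝ) (hs : 0 < s) (ht : 0 < t) :
    (∫ α in (0:ℝ)..1, ((1 - α) * s ^ (m - 1) + α * t ^ (m - 1)) ^ (1 / (m - 1))) ≤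
      ∫ α in (0:ℝ)..1, ((1 - α) * s ^ (m' - 1) + α * t ^ (m' - 1)) ^ (1 / (m' - 1)) :=
  theta_m_monotone_in_m_general m m' hmm' hm1 hm'1 s t hs ht
end
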